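/- arXiv:1506.00552 — 2 statements merged into one kernel-verified Lean document; each statement's English description precedes it below -/
import Mathlib

section
/- Let f : ℝⁿ → ℝ be differentiable with coordinate-wise L-Lipschitz continuous gradient and μ₁-strongly convex with respect to the 1-norm (μ₁ > 0), with minimizer x*. If x^{k+1} = x^k − (1/L)∇_{i_k}f(x^k)e_{i_k} where i_k is chosen by the Gauss-Southwell rule i_k ∈ argmax_i |∇ᵢf(x^k)|, then f(x^{k+1}) − f(x*) ≤ (1 − μ₁/L)(f(x^k) − f(x*)). -/
open scoped RealInnerProductSpace

/-! Along the coordinate line through `x` the function has an `L`-Lipschitz derivative, so the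
one-dimensional descent lemma shows that the exact step `-(1/L) ∇ᵢf(x)` lowers `f` by at least
`(∇ᵢf(x))² / (2L)`. On the other hand, bounding `⟪∇f(x), y - x⟫ ≥ -‖∇f(x)‖_∞ ‖y - x‖₁` in the
1-norm strong convexity inequality and minimizing the resulting quadratic in `‖y - x‖₁` gives
`f(x) - f(x*) ≤ ‖∇f(x)‖_∞² / (2μ₁)`. The Gauss-Southwell coordinate attains `‖∇f(x)‖_∞`, so the
guaranteed decrease is at least `(μ₁ / L) (f(x) - f(x*))`. -/

theorem le_quadratic_of_abs_deriv_sub_le_of_nonneg {φ φ' : ℝ → ℝ} {L t : ℝ}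
    (hφ : ∀ s, HasDerivAt φ (φ' s) s) (hlip : ∀ s, |φ' s - φ' 0| ≤ L * |s|) (ht : 0 ≤ t) :
    φ t ≤ φ 0 + φ' 0 * t + L / 2 * t ^ 2 := by
  set χ : ℝ → ℝ := fun s => φ 0 + φ' 0 * s + L / 2 * s ^ 2 - φ s
  have hχ : ∀ s, HasDerivAt χ (φ' 0 + L * s - φ' s) s := fun s => by
    have := ((((hasDerivAt_id s).const_mul (φ' 0)).const_add (φ 0)).add
      ((hasDerivAt_pow 2 s).const_mul (L / 2))).sub (hφ s)
    exact this.congr_deriv (by simp only [mul_one, Nat.cast_ofNat]; ring)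
  have hmono : MonotoneOn χ (Set.Ici 0) := by
    refine monotoneOn_of_hasDerivWithinAt_nonneg (convex_Ici 0)
      (fun s _ => (hχ s).continuousAt.continuousWithinAt) (fun s _ => (hχ s).hasDerivWithinAt)
      fun s hs => ?_
    rw [interior_Ici, Set.mem_Ioi] at hs
    have := (abs_le.1 (hlip s)).2
    rw [abs_of_pos hs] at this
    linarith
  have hχt : χ 0 ≤ χ t := hmono Set.self_mem_Ici ht ht
  simp only [χ] at hχt
  linarith

theorem le_quadratic_of_abs_deriv_sub_le {φ φ' : ℝ → ℝ} {L : ℝ}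
    (hφ : ∀ s, HasDerivAt φ (φ' s) s) (hlip : ∀ s, |φ' s - φ' 0| ≤ L * |s|) (t : ℝ) :
    φ t ≤ φ 0 + φ' 0 * t + L / 2 * t ^ 2 := by
  rcases le_total 0 t with ht | ht
  · exact le_quadratic_of_abs_deriv_sub_le_of_nonneg hφ hlip ht
  · have hφneg : ∀ s, HasDerivAt (fun s => φ (-s)) (-φ' (-s)) s := fun s => by
      have := (hφ (-s)).comp s (hasDerivAt_neg s)
      rwa [mul_neg_one] at this
    simpa using le_quadratic_of_abs_deriv_sub_le_of_nonneg hφneg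
      (fun s => by simpa [abs_sub_comm, neg_add_eq_sub] using hlip (-s)) (neg_nonneg.2 ht)

theorem HasGradientAt.hasDerivAt_comp_add_smul {F : Type*} [NormedAddCommGroup F]
    [InnerProductSpace ℝ F] [CompleteSpace F] {f : F → ℝ} {g x v : F} {t : ℝ}
    (hf : HasGradientAt f g (x + t • v)) :
    HasDerivAt (fun s : ℝ => f (x + s • v)) ⟪g, v⟫ t := by
  have hline : HasDerivAt (fun s : ℝ => x + s • v) v t := by
    simpa using ((hasDerivAt_id t).smul_const v).const_add x
  have := hf.hasFDerivAt.comp_hasDerivAt t hline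
  rwa [InnerProductSpace.toDual_apply_apply] at this

section CoordinateDescent

variable {ι : Type*} [Fintype ι] [DecidableEq ι]
  {f : EuclideanSpace ℝ ι → ℝ} {f' : EuclideanSpace ℝ ι → EuclideanSpace ℝ ι} {L : ℝ}
  {x : EuclideanSpace ℝ ι} {i : ι}

theorem apply_add_smul_single_le (hf : ∀ x, HasGradientAt f (f' x) x)
    (hlip : ∀ α : ℝ, |f' (x + α • EuclideanSpace.single i 1) i - f' x i| ≤ L * |α|) (t : ℝ) :
    f (x + t • EuclideanSpace.single i 1) ≤ f x + f' x i * t + L / 2 * t ^ 2 := by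
  have hderiv : ∀ s : ℝ, HasDerivAt (fun s : ℝ => f (x + s • EuclideanSpace.single i 1))
      (f' (x + s • EuclideanSpace.single i 1) i) s := fun s => by
    simpa [EuclideanSpace.inner_single_right] using
      (hf (x + s • EuclideanSpace.single i 1)).hasDerivAt_comp_add_smul
  simpa using le_quadratic_of_abs_deriv_sub_le hderiv (fun s => by simpa using hlip s) t

theorem apply_sub_smul_single_le (hf : ∀ x, HasGradientAt f (f' x) x) (hL : L ≠ 0)
    (hlip : ∀ α : ℝ, |f' (x + α • EuclideanSpace.single i 1) i - f' x i| ≤ L * |α|) :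
    f (x - ((1 / L) * f' x i) • EuclideanSpace.single i 1) ≤ f x - f' x i ^ 2 / (2 * L) := by
  have := apply_add_smul_single_le hf hlip (-((1 / L) * f' x i))
  rw [neg_smul, ← sub_eq_add_neg] at this
  convert this using 1
  field_simp
  ring

end CoordinateDescent

section OneNorm

variable {ι : Type*} [Fintype ι]

theorem abs_inner_le_mul_sum_abs {g d : EuclideanSpace ℝ ι} {G : ℝ} (hG : ∀ i, |g i| ≤ G) :
    |⟪g, d⟫| ≤ G * ∑ i, |d i| := by
  simp only [PiLp.inner_apply, RCLike.inner_apply, conj_trivial, Finset.mul_sum]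
  refine (Finset.abs_sum_le_sum_abs _ _).trans (Finset.sum_le_sum fun i _ => ?_)
  rw [abs_mul, mul_comm]
  exact mul_le_mul_of_nonneg_right (hG i) (abs_nonneg _)

theorem two_mul_mul_sub_le_sq_of_add_inner_add_sq_le {g d : EuclideanSpace ℝ ι} {a b μ G : ℝ}
    (hμ : 0 ≤ μ) (hG : ∀ i, |g i| ≤ G) (h : a + ⟪g, d⟫ + μ / 2 * (∑ i, |d i|) ^ 2 ≤ b) :
    2 * μ * (a - b) ≤ G ^ 2 := by
  have hinner := neg_le_of_abs_le (abs_inner_le_mul_sum_abs (d := d) hG)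
  set S := ∑ i, |d i|
  -- 2μ(GS - μS²/2) = G² - (G - μS)²
  nlinarith [sq_nonneg (G - μ * S)]

end OneNorm

theorem gauss_southwell_rate_one_norm_general {n : ℕ}
    (f : EuclideanSpace ℝ (Fin n) → ℝ)
    (f' : EuclideanSpace ℝ (Fin n) → EuclideanSpace ℝ (Fin n))
    (hf : ∀ x, HasGradientAt f (f' x) x)
    (L : ℝ) (hL : 0 < L)
    (hlip : ∀ (x : EuclideanSpace ℝ (Fin n)) (α : ℝ) (i : Fin n),
      |f' (x + α • EuclideanSpace.single i 1) i - f' x i| ≤ L * |α|)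
    (μ₁ : ℝ) (hμ₁ : 0 < μ₁)
    (hsc : ∀ x y, f y ≥ f x + ⟪f' x, y - x⟫ + μ₁ / 2 * (∑ i, |y i - x i|) ^ 2)
    (xs : EuclideanSpace ℝ (Fin n))
    (xk : EuclideanSpace ℝ (Fin n)) (ik : Fin n)
    (hik : ∀ j, |f' xk j| ≤ |f' xk ik|)
    (xk1 : EuclideanSpace ℝ (Fin n))
    (hstep : xk1 = xk - ((1 / L) * f' xk ik) • EuclideanSpace.single ik 1) :
    f xk1 - f xs ≤ (1 - μ₁ / L) * (f xk - f xs) := by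
  have hdescent : f xk1 ≤ f xk - f' xk ik ^ 2 / (2 * L) :=
    hstep ▸ apply_sub_smul_single_le hf hL.ne' (hlip xk · ik)
  have hgap : 2 * μ₁ * (f xk - f xs) ≤ f' xk ik ^ 2 := by
    simpa only [sq_abs] using two_mul_mul_sub_le_sq_of_add_inner_add_sq_le hμ₁.le hik (hsc xk xs)
  have hrate : μ₁ / L * (f xk - f xs) ≤ f' xk ik ^ 2 / (2 * L) := by
    calc μ₁ / L * (f xk - f xs) = 2 * μ₁ * (f xk - f xs) / (2 * L) := by field_simp
      _ ≤ f' xk ik ^ 2 / (2 * L) := by gcongr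
  linarith

/-- refined convergence rate of the Gauss-Southwell rule under
`μ₁`-strong convexity in the 1-norm. -/
theorem gauss_southwell_rate_one_norm {n : ℕ}
    (f : EuclideanSpace ℝ (Fin n) → ℝ)
    (f' : EuclideanSpace ℝ (Fin n) → EuclideanSpace ℝ (Fin n))
    (hf : ∀ x, HasGradientAt f (f' x) x)
    (L : ℝ) (hL : 0 < L)
    (hlip : ∀ (x : EuclideanSpace ℝ (Fin n)) (α : ℝ) (i : Fin n),
      |f' (x + α • EuclideanSpace.single i 1) i - f' x i| ≤ L * |α|)
    (μ₁ : ℝ) (hμ₁ : 0 < μ₁)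
    (hsc : ∀ x y, f y ≥ f x + ⟪f' x, y - x⟫ + μ₁ / 2 * (∑ i, |y i - x i|) ^ 2)
    (xs : EuclideanSpace ℝ (Fin n)) (hxs : ∀ y, f xs ≤ f y)
    (xk : EuclideanSpace ℝ (Fin n)) (ik : Fin n)
    (hik : ∀ j, |f' xk j| ≤ |f' xk ik|)
    (xk1 : EuclideanSpace ℝ (Fin n))
    (hstep : xk1 = xk - ((1 / L) * f' xk ik) • EuclideanSpace.single ik 1) :
    f xk1 - f xs ≤ (1 - μ₁ / L) * (f xk - f xs) :=
  gauss_southwell_rate_one_norm_general f f' hf L hL hlip μ₁ hμ₁ hsc xs xk ik hik xk1 hstep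
end

section
/- Let F(x) = f(x) + Σᵢ gᵢ(xᵢ) where f : ℝⁿ → ℝ is differentiable with coordinate-wise L-Lipschitz continuous gradient and μ-strongly convex in the Euclidean norm (0 < μ ≤ L), each gᵢ : ℝ → ℝ is convex, and x* minimizes F. Define Vᵢ(x, d) = ∇ᵢf(x)·d + (L/2)d² + gᵢ(xᵢ + d) − gᵢ(xᵢ). If i_k is chosen by the GS-q rule i_k ∈ argmin_i { min_d Vᵢ(x^k, d) } and x^{k+1} = x^k + d_{i_k} e_{i_k} where d_{i_k} ∈ argmin_d V_{i_k}(x^k, d), then F(x^{k+1}) − F(x*) ≤ (1 − μ/(nL))(F(x^k) − F(x*)). -/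
/-! A step along coordinate `i` lowers `F` by at least the model value `Vᵢ(x, d)`, by the
one-dimensional descent lemma for the coordinate-wise `L`-Lipschitz gradient. The GS-q choice gives
`n · V_{i_k}(d_{i_k}) ≤ ∑ⱼ minₜ Vⱼ(x, t)`, and evaluating each model at `t = α (x*ⱼ − xⱼ)` with
`α = μ / L` bounds this sum by `α (F x* − F x)`: convexity of the `gⱼ` handles the separable part,
and since `L α² = μ α` the quadratic terms are absorbed by strong convexity of `f`. -/

open scoped RealInnerProductSpace

theorem image_le_of_deriv_sub_le_mul_of_nonneg {φ φ' : ℝ → ℝ} {L a : ℝ}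
    (hφ : ∀ t, HasDerivAt φ (φ' t) t) (hlip : ∀ t, 0 < t → φ' t - φ' 0 ≤ L * t) (ha : 0 ≤ a) :
    φ a ≤ φ 0 + φ' 0 * a + L / 2 * a ^ 2 := by
  set ψ : ℝ → ℝ := fun t ↦ φ t - φ' 0 * t - L / 2 * t ^ 2
  have hψ : ∀ t, HasDerivAt ψ (φ' t - φ' 0 - L * t) t := fun t ↦ by
    refine (((hφ t).sub ((hasDerivAt_id t).const_mul (φ' 0))).sub
      (((hasDerivAt_id t).pow 2).const_mul (L / 2))).congr_deriv ?_
    simp only [id, Nat.cast_ofNat]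
    ring
  have hanti : AntitoneOn ψ (Set.Ici 0) := by
    refine antitoneOn_of_hasDerivWithinAt_nonpos (convex_Ici 0)
      (fun t _ ↦ (hψ t).continuousAt.continuousWithinAt) (fun t _ ↦ (hψ t).hasDerivWithinAt) ?_
    rw [interior_Ici]
    intro t ht
    linarith [hlip t ht]
  have := hanti Set.self_mem_Ici ha ha
  simp only [ψ] at this
  linarith

theorem image_le_of_abs_deriv_sub_le_mul_abs {φ φ' : ℝ → ℝ} {L : ℝ}
    (hφ : ∀ t, HasDerivAt φ (φ' t) t) (hlip : ∀ t, |φ' t - φ' 0| ≤ L * |t|) (a : ℝ) :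
    φ a ≤ φ 0 + φ' 0 * a + L / 2 * a ^ 2 := by
  rcases le_total 0 a with ha | ha
  · refine image_le_of_deriv_sub_le_mul_of_nonneg hφ (fun t ht ↦ ?_) ha
    simpa [abs_of_pos ht] using (abs_le.mp (hlip t)).2
  · have hφneg : ∀ t, HasDerivAt (fun s ↦ φ (-s)) (-φ' (-t)) t := fun t ↦
      ((hφ (-t)).comp t (hasDerivAt_neg t)).congr_deriv (mul_neg_one _)
    have := image_le_of_deriv_sub_le_mul_of_nonneg (L := L) hφneg (fun t ht ↦ ?_)
      (neg_nonneg.mpr ha)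
    · simp only [neg_neg, neg_zero] at this
      linarith
    · have := (abs_le.mp (hlip (-t))).1
      rw [abs_neg, abs_of_pos ht] at this
      simp only [neg_zero]
      linarith

section Coordinates

variable {ι : Type*} [Fintype ι] [DecidableEq ι]

theorem hasDerivAt_comp_add_smul_single {f : EuclideanSpace ℝ ι → ℝ}
    {f' : EuclideanSpace ℝ ι → EuclideanSpace ℝ ι} (hf : ∀ x, HasGradientAt f (f' x) x)
    (x : EuclideanSpace ℝ ι) (i : ι) (t : ℝ) :
    HasDerivAt (fun s : ℝ ↦ f (x + s • EuclideanSpace.single i 1))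
      (f' (x + t • EuclideanSpace.single i 1) i) t := by
  have hline : HasDerivAt (fun s : ℝ ↦ x + s • EuclideanSpace.single i (1 : ℝ))
      (EuclideanSpace.single i 1) t := by
    simpa using ((hasDerivAt_id t).smul_const (EuclideanSpace.single i (1 : ℝ))).const_add x
  refine ((hf _).hasFDerivAt.comp_hasDerivAt t hline).congr_deriv ?_
  simp [InnerProductSpace.toDual_apply_apply, EuclideanSpace.inner_single_right]

theorem le_add_grad_mul_add_sq_of_coord_lipschitz {f : EuclideanSpace ℝ ι → ℝ}
    {f' : EuclideanSpace ℝ ι → EuclideanSpace ℝ ι} (hf : ∀ x, HasGradientAt f (f' x) x)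
    {L : ℝ} {x : EuclideanSpace ℝ ι} {i : ι}
    (hlip : ∀ α : ℝ, |f' (x + α • EuclideanSpace.single i 1) i - f' x i| ≤ L * |α|) (a : ℝ) :
    f (x + a • EuclideanSpace.single i 1) ≤ f x + f' x i * a + L / 2 * a ^ 2 := by
  simpa using image_le_of_abs_deriv_sub_le_mul_abs (hasDerivAt_comp_add_smul_single hf x i)
    (by simpa using hlip) a

theorem sum_apply_add_smul_single (g : ι → ℝ → ℝ) (x : EuclideanSpace ℝ ι) (i : ι) (a : ℝ) :
    ∑ j, g j ((x + a • EuclideanSpace.single i 1 : EuclideanSpace ℝ ι) j) =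
      ∑ j, g j (x j) + (g i (x i + a) - g i (x i)) := by
  rw [← sub_eq_iff_eq_add', ← Finset.sum_sub_distrib,
    Finset.sum_eq_single i (fun j _ hji ↦ by simp [hji]) (by simp)]
  simp

end Coordinates

section Model

variable {ι : Type*}

/-- The paper's `Vᵢ(x, t)`. -/
noncomputable def coordModel (f' : EuclideanSpace ℝ ι → EuclideanSpace ℝ ι) (L : ℝ) (g : ι → ℝ → ℝ)
    (x : EuclideanSpace ℝ ι) (i : ι) (t : ℝ) : ℝ :=
  f' x i * t + L / 2 * t ^ 2 + g i (x i + t) - g i (x i)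

theorem add_sum_le_add_coordModel [Fintype ι] [DecidableEq ι] {f : EuclideanSpace ℝ ι → ℝ}
    {f' : EuclideanSpace ℝ ι → EuclideanSpace ℝ ι} (hf : ∀ x, HasGradientAt f (f' x) x)
    {L : ℝ} (g : ι → ℝ → ℝ) {x : EuclideanSpace ℝ ι} {i : ι}
    (hlip : ∀ α : ℝ, |f' (x + α • EuclideanSpace.single i 1) i - f' x i| ≤ L * |α|) (a : ℝ) :
    f (x + a • EuclideanSpace.single i 1) +
        ∑ j, g j ((x + a • EuclideanSpace.single i 1 : EuclideanSpace ℝ ι) j) ≤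
      f x + ∑ j, g j (x j) + coordModel f' L g x i a := by
  rw [sum_apply_add_smul_single, coordModel]
  linarith [le_add_grad_mul_add_sq_of_coord_lipschitz hf hlip a]

theorem coordModel_smul_sub_le {f' : EuclideanSpace ℝ ι → EuclideanSpace ℝ ι} {L μ α : ℝ}
    {g : ι → ℝ → ℝ} (x y : EuclideanSpace ℝ ι) (j : ι) (hg : ConvexOn ℝ Set.univ (g j))
    (hα₀ : 0 ≤ α) (hα₁ : α ≤ 1) (hLα : L * α ≤ μ) :
    coordModel f' L g x j (α * (y j - x j)) ≤
      α * (f' x j * (y j - x j) + μ / 2 * (y j - x j) ^ 2 + (g j (y j) - g j (x j))) := by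
  have hconv : g j (x j + α * (y j - x j)) ≤ (1 - α) * g j (x j) + α * g j (y j) := by
    have h := hg.2 (Set.mem_univ (x j)) (Set.mem_univ (y j)) (sub_nonneg.mpr hα₁) hα₀
      (sub_add_cancel 1 α)
    simp only [smul_eq_mul] at h
    rwa [show (1 - α) * x j + α * y j = x j + α * (y j - x j) by ring] at h
  have hquad : L / 2 * (α * (y j - x j)) ^ 2 ≤ α * (μ / 2 * (y j - x j) ^ 2) := by
    have := mul_le_mul_of_nonneg_left hLα (mul_nonneg hα₀ (sq_nonneg (y j - x j)))
    linarith
  rw [coordModel]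
  linarith

theorem sum_coordModel_smul_sub_le [Fintype ι] {f : EuclideanSpace ℝ ι → ℝ}
    {f' : EuclideanSpace ℝ ι → EuclideanSpace ℝ ι} {L μ α : ℝ} {g : ι → ℝ → ℝ}
    {x y : EuclideanSpace ℝ ι} (hsc : f y ≥ f x + ⟪f' x, y - x⟫ + μ / 2 * ‖y - x‖ ^ 2)
    (hg : ∀ j, ConvexOn ℝ Set.univ (g j)) (hα₀ : 0 ≤ α) (hα₁ : α ≤ 1) (hLα : L * α ≤ μ) :
    ∑ j, coordModel f' L g x j (α * (y j - x j)) ≤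
      α * (f y + ∑ j, g j (y j) - (f x + ∑ j, g j (x j))) := by
  have hinner : ⟪f' x, y - x⟫ = ∑ j, f' x j * (y j - x j) := by
    simp [PiLp.inner_apply, mul_comm]
  rw [hinner, EuclideanSpace.real_norm_sq_eq] at hsc
  calc ∑ j, coordModel f' L g x j (α * (y j - x j))
      ≤ ∑ j, α * (f' x j * (y j - x j) + μ / 2 * (y j - x j) ^ 2 + (g j (y j) - g j (x j))) :=
        Finset.sum_le_sum fun j _ ↦ coordModel_smul_sub_le x y j (hg j) hα₀ hα₁ hLα
    _ = α * (∑ j, f' x j * (y j - x j) + μ / 2 * ∑ j, (y - x) j ^ 2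
          + (∑ j, g j (y j) - ∑ j, g j (x j))) := by
        simp only [← Finset.mul_sum, Finset.sum_add_distrib, Finset.sum_sub_distrib, PiLp.sub_apply]
    _ ≤ α * (f y + ∑ j, g j (y j) - (f x + ∑ j, g j (x j))) := by
        gcongr
        linarith

end Model

theorem proximal_gs_q_rate_general {n : ℕ}
    (f : EuclideanSpace ℝ (Fin n) → ℝ)
    (f' : EuclideanSpace ℝ (Fin n) → EuclideanSpace ℝ (Fin n))
    (hf : ∀ x, HasGradientAt f (f' x) x)
    (L : ℝ) (hL : 0 < L)
    (hlip : ∀ (x : EuclideanSpace ℝ (Fin n)) (α : ℝ) (i : Fin n),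
      |f' (x + α • EuclideanSpace.single i 1) i - f' x i| ≤ L * |α|)
    (μ : ℝ) (hμ : 0 < μ) (hμL : μ ≤ L)
    (hsc : ∀ x y, f y ≥ f x + ⟪f' x, y - x⟫ + μ / 2 * ‖y - x‖ ^ 2)
    (g : Fin n → ℝ → ℝ) (hg : ∀ i, ConvexOn ℝ Set.univ (g i))
    (F : EuclideanSpace ℝ (Fin n) → ℝ)
    (hF : ∀ x, F x = f x + ∑ i, g i (x i))
    (xs : EuclideanSpace ℝ (Fin n))
    (xk : EuclideanSpace ℝ (Fin n)) (d : Fin n → ℝ)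
    (hd : ∀ (i : Fin n) (t : ℝ),
      f' xk i * d i + L / 2 * (d i) ^ 2 + g i (xk i + d i) - g i (xk i)
        ≤ f' xk i * t + L / 2 * t ^ 2 + g i (xk i + t) - g i (xk i))
    (ik : Fin n)
    (hik : ∀ j : Fin n,
      f' xk ik * d ik + L / 2 * (d ik) ^ 2 + g ik (xk ik + d ik) - g ik (xk ik)
        ≤ f' xk j * d j + L / 2 * (d j) ^ 2 + g j (xk j + d j) - g j (xk j))
    (xk1 : EuclideanSpace ℝ (Fin n))
    (hstep : xk1 = xk + d ik • EuclideanSpace.single ik 1) :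
    F xk1 - F xs ≤ (1 - μ / (n * L)) * (F xk - F xs) := by
  set V := coordModel f' L g xk
  have hn : (0 : ℝ) < n := Nat.cast_pos.mpr ik.pos
  have hdescent : F xk1 ≤ F xk + V ik (d ik) := by
    rw [hstep, hF, hF]
    exact add_sum_le_add_coordModel hf g (hlip xk · ik) (d ik)
  have hgsq : n * V ik (d ik) ≤ ∑ j, V j (d j) := by
    simpa only [Finset.card_univ, Fintype.card_fin, nsmul_eq_mul] using
      Finset.card_nsmul_le_sum Finset.univ (fun j ↦ V j (d j)) (V ik (d ik)) fun j _ ↦ hik j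
  have hcompare : ∑ j, V j (d j) ≤ μ / L * (F xs - F xk) := by
    rw [hF, hF]
    refine (Finset.sum_le_sum fun j _ ↦ hd j (μ / L * (xs j - xk j))).trans ?_
    exact sum_coordModel_smul_sub_le (hsc xk xs) hg (div_nonneg hμ.le hL.le)
      ((div_le_one hL).mpr hμL) (mul_div_cancel₀ μ hL.ne').le
  have hmodel : V ik (d ik) ≤ μ / L * (F xs - F xk) / n := by
    rw [le_div_iff₀ hn]
    linarith
  have hrate : μ / (n * L) * (F xk - F xs) = -(μ / L * (F xs - F xk) / n) := by
    field_simp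
    ring
  rw [sub_mul, one_mul, hrate]
  linarith

/-- the proximal Gauss-Southwell GS-q rule attains at least the
rate of randomized proximal coordinate descent, `(1 − μ/(nL))`. -/
theorem proximal_gs_q_rate {n : ℕ}
    (f : EuclideanSpace ℝ (Fin n) → ℝ)
    (f' : EuclideanSpace ℝ (Fin n) → EuclideanSpace ℝ (Fin n))
    (hf : ∀ x, HasGradientAt f (f' x) x)
    (L : ℝ) (hL : 0 < L)
    (hlip : ∀ (x : EuclideanSpace ℝ (Fin n)) (α : ℝ) (i : Fin n),
      |f' (x + α • EuclideanSpace.single i 1) i - f' x i| ≤ L * |α|)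
    (μ : ℝ) (hμ : 0 < μ) (hμL : μ ≤ L)
    (hsc : ∀ x y, f y ≥ f x + ⟪f' x, y - x⟫ + μ / 2 * ‖y - x‖ ^ 2)
    (g : Fin n → ℝ → ℝ) (hg : ∀ i, ConvexOn ℝ Set.univ (g i))
    (F : EuclideanSpace ℝ (Fin n) → ℝ)
    (hF : ∀ x, F x = f x + ∑ i, g i (x i))
    (xs : EuclideanSpace ℝ (Fin n)) (hxs : ∀ y, F xs ≤ F y)
    (xk : EuclideanSpace ℝ (Fin n)) (d : Fin n → ℝ)
    (hd : ∀ (i : Fin n) (t : ℝ),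
      f' xk i * d i + L / 2 * (d i) ^ 2 + g i (xk i + d i) - g i (xk i)
        ≤ f' xk i * t + L / 2 * t ^ 2 + g i (xk i + t) - g i (xk i))
    (ik : Fin n)
    (hik : ∀ j : Fin n,
      f' xk ik * d ik + L / 2 * (d ik) ^ 2 + g ik (xk ik + d ik) - g ik (xk ik)
        ≤ f' xk j * d j + L / 2 * (d j) ^ 2 + g j (xk j + d j) - g j (xk j))
    (xk1 : EuclideanSpace ℝ (Fin n))
    (hstep : xk1 = xk + d ik • EuclideanSpace.single ik 1) :
    F xk1 - F xs ≤ (1 - μ / (n * L)) * (F xk - F xs) :=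
  proximal_gs_q_rate_general f f' hf L hL hlip μ hμ hμL hsc g hg F hF xs xk d hd ik hik xk1 hstep
end
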